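/- Let $\psi$ be an $A$-wavelet and $V_0 = \overline{\mathrm{span}}\{\psi_{l,k} : l < 0, k \in \mathbb{Z}^n\}$. Then $V_0$ is invariant under translation by every element of $\mathbb{Z}^n$: if $f \in V_0$ and $m \in \mathbb{Z}^n$, then $f(\cdot - m) \in V_0$. -/

import Mathlib

open MeasureTheory Matrix Complex Real

noncomputable section

abbrev Rn (n : ℕ) := Fin n → ℝ

/-- The real matrix associated to an integer matrix. -/
def matR {n : ℕ} (A : Matrix (Fin n) (Fin n) ℤ) : Matrix (Fin n) (Fin n) ℝ :=
  A.map (Int.cast : ℤ → ℝ)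

/-- A dilation matrix: an integer matrix all of whose (complex) eigenvalues
have absolute value greater than 1. -/
def IsDilationMatrix {n : ℕ} (A : Matrix (Fin n) (Fin n) ℤ) : Prop :=
  ∀ μ : ℂ, (A.map (Int.cast : ℤ → ℂ)).charpoly.IsRoot μ → 1 < ‖μ‖

/-- An integer vector viewed as a real vector. -/
def intVec {n : ℕ} (k : Fin n → ℤ) : Rn n := fun i => (k i : ℝ)

/-- ψ_{j,k}(x) = a^{j/2} ψ(A^j x − k). -/
def wav {n : ℕ} (A : Matrix (Fin n) (Fin n) ℤ) (ψ : Rn n → ℂ) (j : ℤ) (k : Fin n → ℤ) :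
    Rn n → ℂ :=
  fun x => ((A.det.natAbs : ℝ) ^ ((j : ℝ) / 2) : ℝ) * ψ (((matR A) ^ j).mulVec x - intVec k)

/-- ψ is an A-wavelet: the system {ψ_{j,k}} is orthonormal and complete in L²(ℝⁿ). -/
def IsAWavelet {n : ℕ} (A : Matrix (Fin n) (Fin n) ℤ) (ψ : Rn n → ℂ) : Prop :=
  MemLp ψ 2 volume ∧
  (∀ (j j' : ℤ) (k k' : Fin n → ℤ),
      ∫ x, wav A ψ j k x * (starRingEnd ℂ) (wav A ψ j' k' x) =
        if j = j' ∧ k = k' then 1 else 0) ∧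
  (∀ f : Rn n → ℂ, MemLp f 2 volume →
      (∀ (j : ℤ) (k : Fin n → ℤ), ∫ x, f x * (starRingEnd ℂ) (wav A ψ j k x) = 0) →
      f =ᵐ[volume] 0)

/-- The space V_j: closed linear span of {ψ_{l,k} : l < j, k ∈ ℤⁿ} in L². -/
def Vsp {n : ℕ} (A : Matrix (Fin n) (Fin n) ℤ) (ψ : Rn n → ℂ)
    (hm : ∀ (j : ℤ) (k : Fin n → ℤ), MemLp (wav A ψ j k) 2 volume) (j : ℤ) :
    Submodule ℂ (Lp ℂ 2 (volume : Measure (Rn n))) :=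
  (Submodule.span ℂ
    {g | ∃ (l : ℤ) (k : Fin n → ℤ), l < j ∧ g = (hm l k).toLp}).topologicalClosure

/-- Invariance of a closed subspace S of L² under all translations T_{A^{-r}k}, k ∈ ℤⁿ. -/
def GrInvariant {n : ℕ} (A : Matrix (Fin n) (Fin n) ℤ)
    (S : Submodule ℂ (Lp ℂ 2 (volume : Measure (Rn n)))) (r : ℤ) : Prop :=
  ∀ (k : Fin n → ℤ) (f : Rn n → ℂ) (hf : MemLp f 2 volume)
    (hft : MemLp (fun x => f (x - ((matR A) ^ (-r)).mulVec (intVec k))) 2 volume),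
    hf.toLp ∈ S → hft.toLp ∈ S

/-- Fourier transform with the convention f̂(ξ) = ∫ f(x) e^{-i⟨ξ,x⟩} dx. -/
def ftransform {n : ℕ} (f : Rn n → ℂ) (ξ : Rn n) : ℂ :=
  ∫ x, Complex.exp (-(Complex.I) * (∑ i, (ξ i : ℂ) * (x i : ℝ))) * f x

/-! ### Auxiliary lemmas -/

/-- If `u` is orthogonal to every element of `T`, then `u` is in the orthogonal complement of
the closed span of `T`. -/
lemma mem_orth_closure_span {E : Type*} [NormedAddCommGroup E] [InnerProductSpace ℂ E]
    (T : Set E) (u : E) (h : ∀ v ∈ T, (inner ℂ v u : ℂ) = 0) :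
    u ∈ ((Submodule.span ℂ T).topologicalClosure)ᗮ := by
  have hle : Submodule.span ℂ T ≤ (ℂ ∙ u)ᗮ := by
    rw [Submodule.span_le]
    intro v hv
    exact Submodule.mem_orthogonal_singleton_iff_inner_left.2 (h v hv)
  have hcl : (Submodule.span ℂ T).topologicalClosure ≤ (ℂ ∙ u)ᗮ :=
    Submodule.topologicalClosure_minimal _ hle (Submodule.isClosed_orthogonal _)
  rw [Submodule.mem_orthogonal]
  intro v hv
  exact inner_eq_zero_symm.mp (Submodule.mem_orthogonal_singleton_iff_inner_right.1 (hcl hv))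

lemma inner_toLp_left {n : ℕ} {w : Rn n → ℂ} (hw : MemLp w 2 volume)
    (g : Lp ℂ 2 (volume : Measure (Rn n))) :
    (inner ℂ (hw.toLp w) g : ℂ) = ∫ x, (g : Rn n → ℂ) x * (starRingEnd ℂ) (w x) := by
  rw [MeasureTheory.L2.inner_def]
  refine integral_congr_ae ?_
  filter_upwards [hw.coeFn_toLp] with x hx
  rw [RCLike.inner_apply', hx, mul_comm]

lemma inner_toLp_toLp {n : ℕ} {w h : Rn n → ℂ} (hw : MemLp w 2 volume)
    (hh : MemLp h 2 volume) :
    (inner ℂ (hw.toLp w) (hh.toLp h) : ℂ) = ∫ x, h x * (starRingEnd ℂ) (w x) := by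
  rw [inner_toLp_left hw]
  refine integral_congr_ae ?_
  filter_upwards [hh.coeFn_toLp] with x hx
  rw [hx]

lemma matR_pow_int {n : ℕ} (A : Matrix (Fin n) (Fin n) ℤ) {l : ℤ} (hl : 0 ≤ l) :
    (matR A) ^ l = matR (A ^ l.toNat) := by
  have : (matR A) ^ l = (matR A) ^ l.toNat := by
    rw [← zpow_natCast, Int.toNat_of_nonneg hl]
  rw [this]
  show ((Int.castRingHom ℝ).mapMatrix A) ^ l.toNat = (Int.castRingHom ℝ).mapMatrix (A ^ l.toNat)
  rw [map_pow]

lemma matR_mulVec_intVec {n : ℕ} (B : Matrix (Fin n) (Fin n) ℤ) (m : Fin n → ℤ) :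
    (matR B).mulVec (intVec m) = intVec (B.mulVec m) := by
  funext i
  simp only [matR, Matrix.mulVec, dotProduct, intVec, Matrix.map_apply]
  push_cast
  rfl

lemma wav_translate {n : ℕ} (A : Matrix (Fin n) (Fin n) ℤ) (ψ : Rn n → ℂ)
    {l : ℤ} (hl : 0 ≤ l) (k m : Fin n → ℤ) (y : Rn n) :
    wav A ψ l k (y + intVec m) = wav A ψ l (k - (A ^ l.toNat).mulVec m) y := by
  unfold wav
  congr 2
  rw [matR_pow_int A hl, Matrix.mulVec_add, matR_mulVec_intVec]
  have : intVec (k - (A ^ l.toNat).mulVec m) = intVec k - intVec ((A ^ l.toNat).mulVec m) := by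
    funext i; simp [intVec]
  rw [this]
  abel

/-- V_0 is invariant under translation by elements of ℤⁿ. -/
theorem Vsp_zero_int_translation_invariant {n : ℕ} (A : Matrix (Fin n) (Fin n) ℤ)
    (hA : IsDilationMatrix A) (ψ : Rn n → ℂ) (hψ : IsAWavelet A ψ)
    (hm : ∀ (j : ℤ) (k : Fin n → ℤ), MemLp (wav A ψ j k) 2 volume)
    (f : Rn n → ℂ) (hf : MemLp f 2 volume) (m : Fin n → ℤ)
    (hft : MemLp (fun x => f (x - intVec m)) 2 volume)
    (h : hf.toLp ∈ Vsp A ψ hm 0) :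
    hft.toLp ∈ Vsp A ψ hm 0 := by
  classical
  -- generating sets
  set Tneg : Set (Lp ℂ 2 (volume : Measure (Rn n))) :=
    {g | ∃ (l : ℤ) (k : Fin n → ℤ), l < 0 ∧ g = (hm l k).toLp} with hTneg
  set Tpos : Set (Lp ℂ 2 (volume : Measure (Rn n))) :=
    {g | ∃ (l : ℤ) (k : Fin n → ℤ), 0 ≤ l ∧ g = (hm l k).toLp} with hTpos
  set S : Submodule ℂ (Lp ℂ 2 (volume : Measure (Rn n))) :=
    (Submodule.span ℂ Tpos).topologicalClosure with hS
  have hV : Vsp A ψ hm 0 = (Submodule.span ℂ Tneg).topologicalClosure := rfl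
  -- orthonormality in inner-product form
  have hinner : ∀ (j j' : ℤ) (k k' : Fin n → ℤ),
      (inner ℂ ((hm j k).toLp _) ((hm j' k').toLp _) : ℂ) =
        if j = j' ∧ k = k' then 1 else 0 := by
    intro j j' k k'
    rw [inner_toLp_toLp, hψ.2.1 j' j k' k]
    exact if_congr (and_congr eq_comm eq_comm) rfl rfl
  -- V0 ≤ Sᗮ
  have hVS : Vsp A ψ hm 0 ≤ Sᗮ := by
    rw [hV]
    refine Submodule.topologicalClosure_minimal _ ?_ (Submodule.isClosed_orthogonal _)
    rw [Submodule.span_le]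
    rintro g ⟨l, k, hl, rfl⟩
    refine SetLike.mem_coe.2 (mem_orth_closure_span Tpos _ ?_)
    rintro v ⟨l', k', hl', rfl⟩
    rw [hinner]
    simp [show ¬ (l' = l) from fun hh => absurd (hh ▸ hl') (not_le.2 hl)]
  -- Sᗮ ≤ V0
  have hSV : Sᗮ ≤ Vsp A ψ hm 0 := by
    intro f' hf'
    haveI : CompleteSpace (Vsp A ψ hm 0) :=
      (Submodule.isClosed_topologicalClosure _).completeSpace_coe
    set g : Lp ℂ 2 (volume : Measure (Rn n)) :=
      f' - ((Vsp A ψ hm 0).orthogonalProjectionOnto f' : Lp ℂ 2 (volume : Measure (Rn n))) with hg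
    have hgV : g ∈ (Vsp A ψ hm 0)ᗮ := Submodule.sub_starProjection_mem_orthogonal f'
    have hgS : g ∈ Sᗮ := by
      refine Submodule.sub_mem _ hf' ?_
      exact hVS ((Vsp A ψ hm 0).orthogonalProjectionOnto f').2
    have hzero : ∀ (j : ℤ) (k : Fin n → ℤ),
        ∫ x, (g : Rn n → ℂ) x * (starRingEnd ℂ) (wav A ψ j k x) = 0 := by
      intro j k
      rw [← inner_toLp_left (hm j k) g]
      have htoLp : (hm j k).toLp _ = ((hm j k).toLp (wav A ψ j k)) := rfl
      rcases lt_or_ge j 0 with hj | hj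
      · refine (Submodule.mem_orthogonal _ _).1 hgV _ ?_
        exact Submodule.le_topologicalClosure _ (Submodule.subset_span ⟨j, k, hj, rfl⟩)
      · refine (Submodule.mem_orthogonal _ _).1 hgS _ ?_
        exact Submodule.le_topologicalClosure _ (Submodule.subset_span ⟨j, k, hj, rfl⟩)
    have hgz : g = 0 := by
      exact (Lp.eq_zero_iff_ae_eq_zero).2 (hψ.2.2 _ (Lp.memLp g) hzero)
    have : f' = ((Vsp A ψ hm 0).orthogonalProjectionOnto f' : Lp ℂ 2 (volume : Measure (Rn n))) :=
      sub_eq_zero.mp hgz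
    rw [this]
    exact ((Vsp A ψ hm 0).orthogonalProjectionOnto f').2
  -- the translate is in Sᗮ
  refine hSV ?_
  have : hft.toLp _ ∈ ((Submodule.span ℂ Tpos).topologicalClosure)ᗮ := by
    refine mem_orth_closure_span Tpos _ ?_
    rintro v ⟨l, k, hl, rfl⟩
    rw [inner_toLp_toLp]
    have step1 : (∫ x, f (x - intVec m) * (starRingEnd ℂ) (wav A ψ l k x)) =
        ∫ x, f x * (starRingEnd ℂ) (wav A ψ l (k - (A ^ l.toNat).mulVec m) x) := by
      rw [← integral_add_right_eq_self
          (fun x => f (x - intVec m) * (starRingEnd ℂ) (wav A ψ l k x)) (intVec m)]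
      refine integral_congr_ae (Filter.Eventually.of_forall fun x => ?_)
      simp only [add_sub_cancel_right]
      rw [wav_translate A ψ hl k m x]
    rw [step1, ← inner_toLp_toLp (hm l (k - (A ^ l.toNat).mulVec m)) hf]
    refine (Submodule.mem_orthogonal _ _).1 (hVS h) _ ?_
    exact Submodule.le_topologicalClosure _
      (Submodule.subset_span ⟨l, k - (A ^ l.toNat).mulVec m, hl, rfl⟩)
  exact this

end
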